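/- arXiv:0912.4761 — 4 statements merged into one kernel-verified Lean document; each statement's English description precedes it below -/
import Mathlib

section
/- Let q be a prime power, let P_1, ..., P_{q^2+q+1} be an enumeration of P^2(F_q), and let d > q^2 + q be an integer. Let S_d be the set of homogeneous polynomials of degree d in F_q[X,Y,Z] (including 0). Then for any 0 ≤ t ≤ q^2+q+1, the proportion of F in S_d such that F(P_i) = 0 for 1 ≤ i ≤ t and F(P_i) ≠ 0 for t+1 ≤ i ≤ q^2+q+1 equals (1/q)^t · ((q-1)/q)^{q^2+q+1-t}. -/
open MvPolynomial Finset

section Aux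
variable {F : Type*} [Field F] [Fintype F]

noncomputable def linForm (c : Fin 3 → F) : MvPolynomial (Fin 3) F := ∑ k, C (c k) * X k

lemma linForm_homog (c : Fin 3 → F) : (linForm c).IsHomogeneous 1 :=
  MvPolynomial.IsHomogeneous.sum _ _ _ fun k _ => isHomogeneous_C_mul_X (c k) k

lemma eval_linForm (c x : Fin 3 → F) : eval x (linForm c) = ∑ k, c k * x k := by
  simp [linForm]

lemma sep_sum (i j : Fin 3) (a b : F) (x : Fin 3 → F) :
    ∑ k, ((Pi.single i a - Pi.single j b : Fin 3 → F)) k * x k = a * x i - b * x j := by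
  simp only [Pi.sub_apply, sub_mul, Finset.sum_sub_distrib, Pi.single_apply, ite_mul, zero_mul,
    Finset.sum_ite_eq', Finset.mem_univ, if_true]

lemma exists_sep {v w : Fin 3 → F} (hw : w ≠ 0) (h : ∀ a : F, v ≠ a • w) :
    ∃ c : Fin 3 → F, (∑ k, c k * w k) = 0 ∧ (∑ k, c k * v k) ≠ 0 := by
  obtain ⟨j, hj⟩ : ∃ j, w j ≠ 0 := by
    by_contra hc; push_neg at hc; exact hw (funext hc)
  obtain ⟨i, hi⟩ : ∃ i, v i * w j ≠ v j * w i := by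
    by_contra hc; push_neg at hc
    apply h (v j * (w j)⁻¹)
    funext i
    have hci := hc i
    have : v i = v j * (w j)⁻¹ * w i := by field_simp; linear_combination hci
    simpa using this
  refine ⟨(Pi.single i (w j) - Pi.single j (w i) : Fin 3 → F), ?_, ?_⟩
  · rw [sep_sum]; ring
  · rw [sep_sum, sub_ne_zero]
    intro hcon; exact hi (by linear_combination hcon)

lemma exists_bump {N : ℕ} (P : Fin N → Projectivization F (Fin 3 → F))
    (hP : Function.Injective P) {d : ℕ} (hd : N ≤ d + 1) (i : Fin N) :
    ∃ G : MvPolynomial (Fin 3) F, G.IsHomogeneous d ∧ eval (P i).rep G ≠ 0 ∧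
      ∀ j, j ≠ i → eval (P j).rep G = 0 := by
  have hsep : ∀ j : Fin N, ∃ c : Fin 3 → F,
      j ≠ i → (∑ k, c k * (P j).rep k) = 0 ∧ (∑ k, c k * (P i).rep k) ≠ 0 := by
    intro j
    by_cases hji : j = i
    · exact ⟨0, fun h => absurd hji h⟩
    · have hne : ∀ a : F, (P i).rep ≠ a • (P j).rep := by
        intro a ha
        apply hji
        have : Projectivization.mk F ((P i).rep) (P i).rep_nonzero
            = Projectivization.mk F ((P j).rep) (P j).rep_nonzero := by
          rw [Projectivization.mk_eq_mk_iff']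
          exact ⟨a, ha.symm⟩
        rw [Projectivization.mk_rep, Projectivization.mk_rep] at this
        exact (hP this).symm
      obtain ⟨c, hc⟩ := exists_sep (v := (P i).rep) (w := (P j).rep) (P j).rep_nonzero hne
      exact ⟨c, fun _ => hc⟩
  choose c hc using hsep
  obtain ⟨k, hk⟩ : ∃ k, (P i).rep k ≠ 0 := by
    by_contra hcon; push_neg at hcon; exact (P i).rep_nonzero (funext hcon)
  refine ⟨(∏ j ∈ univ.erase i, linForm (c j)) * (X k) ^ (d - (N - 1)), ?_, ?_, ?_⟩
  · have h1 : (∏ j ∈ univ.erase i, linForm (c j)).IsHomogeneous (N - 1) := by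
      have := MvPolynomial.IsHomogeneous.prod (univ.erase i) (fun j => linForm (c j))
        (fun _ => 1) (fun j _ => linForm_homog (c j))
      simpa [Finset.card_erase_of_mem] using this
    have h2 := h1.mul (isHomogeneous_X_pow (R := F) k (d - (N - 1)))
    rwa [Nat.add_sub_cancel' (by omega : N - 1 ≤ d)] at h2
  · rw [map_mul, map_pow, eval_X]
    refine mul_ne_zero ?_ (pow_ne_zero _ hk)
    rw [map_prod]
    rw [Finset.prod_ne_zero_iff]
    intro j hj
    rw [eval_linForm]
    exact (hc j (Finset.mem_erase.1 hj).1).2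
  · intro j hj
    rw [map_mul, map_prod]
    refine mul_eq_zero_of_left (Finset.prod_eq_zero (Finset.mem_erase.2 ⟨hj, mem_univ j⟩) ?_) _
    rw [eval_linForm]
    exact (hc j hj).1

lemma card_fiber_eq {R M V : Type*} [Field R] [AddCommGroup M] [Module R M]
    [AddCommGroup V] [Module R V] [Module.Free R V] (φ : M →ₗ[R] V)
    (hφ : Function.Surjective φ) (Q : V → Prop) :
    Nat.card {x : M // Q (φ x)} = Nat.card (LinearMap.ker φ) * Nat.card {v : V // Q v} := by
  obtain ⟨ψ, hψ⟩ := φ.exists_rightInverse_of_surjective (LinearMap.range_eq_top.2 hφ)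
  have hψ' : ∀ v, φ (ψ v) = v := fun v => by
    rw [← LinearMap.comp_apply, hψ]; rfl
  have e : {x : M // Q (φ x)} ≃ (LinearMap.ker φ) × {v : V // Q v} :=
    { toFun := fun x => (⟨x.1 - ψ (φ x.1), by simp [LinearMap.mem_ker, hψ']⟩, ⟨φ x.1, x.2⟩)
      invFun := fun p => ⟨p.1.1 + ψ p.2.1, by
        have h0 : φ p.1.1 = 0 := LinearMap.mem_ker.1 p.1.2
        rw [map_add, h0, hψ', zero_add]
        exact p.2.2⟩
      left_inv := fun x => by simp
      right_inv := fun p => by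
        have h0 : φ p.1.1 = 0 := LinearMap.mem_ker.1 p.1.2
        ext <;> simp [h0, hψ'] }
  rw [Nat.card_congr e, Nat.card_prod]

end Aux

/-- Let `q` be a prime power, `P₁, …, P_{q²+q+1}` an enumeration of `ℙ²(F_q)`, and
`d > q² + q`.  Among homogeneous degree-`d` forms `F ∈ S_d` over `F_q`, the
proportion of those with `F(Pᵢ) = 0` for `i ≤ t` and `F(Pᵢ) ≠ 0` for `i > t`
equals `(1/q)^t · ((q-1)/q)^{q²+q+1-t}`. -/
theorem proportion_with_prescribed_vanishing (F : Type*) [Field F] [Fintype F]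
    (q : ℕ) (hq : Fintype.card F = q)
    (P : Fin (q ^ 2 + q + 1) → Projectivization F (Fin 3 → F))
    (hP : Function.Bijective P)
    (d t : ℕ) (hd : q ^ 2 + q < d) (ht : t ≤ q ^ 2 + q + 1) :
    (Nat.card {G : MvPolynomial (Fin 3) F // G.IsHomogeneous d ∧
        (∀ i : Fin (q ^ 2 + q + 1), (i : ℕ) < t → eval (P i).rep G = 0) ∧
        (∀ i : Fin (q ^ 2 + q + 1), t ≤ (i : ℕ) → eval (P i).rep G ≠ 0)} : ℚ) /
      (Nat.card {G : MvPolynomial (Fin 3) F // G.IsHomogeneous d} : ℚ)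
    = (1 / q) ^ t * ((q - 1) / q) ^ (q ^ 2 + q + 1 - t) := by
  classical
  have hq1 : 1 ≤ q := by rw [← hq]; exact Fintype.card_pos
  set M := homogeneousSubmodule (Fin 3) F d with hM
  let φ : M →ₗ[F] (Fin (q ^ 2 + q + 1) → F) :=
    { toFun := fun x i => eval (P i).rep x.1
      map_add' := fun x y => by funext i; simp
      map_smul' := fun a x => by funext i; simp [MvPolynomial.smul_eval] }
  have hφval : ∀ (x : M) i, φ x i = eval (P i).rep x.1 := fun _ _ => rfl
  have hφs : Function.Surjective φ := by
    intro v
    choose G hGh hGne hGz using fun i => exists_bump P hP.1 (d := d) (by omega) i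
    refine ⟨∑ i, (v i * (eval (P i).rep (G i))⁻¹) •
      (⟨G i, (mem_homogeneousSubmodule _ _).2 (hGh i)⟩ : M), ?_⟩
    funext j
    rw [map_sum, Finset.sum_apply, Finset.sum_eq_single j]
    · rw [map_smul]
      simp only [Pi.smul_apply, smul_eq_mul]
      rw [hφval, mul_assoc, inv_mul_cancel₀ (hGne j), mul_one]
    · intro i _ hij
      rw [map_smul]
      simp only [Pi.smul_apply, smul_eq_mul]
      rw [hφval, hGz i j (Ne.symm hij), mul_zero]
    · intro h; exact absurd (Finset.mem_univ j) h
  haveI hMfin : Finite M := by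
    haveI : Finite (restrictTotalDegree (Fin 3) F d) := Module.finite_of_finite F
    refine Finite.of_injective (fun x : M =>
      (⟨x.1, (mem_restrictTotalDegree _ _ _).2
        ((mem_homogeneousSubmodule _ _).1 x.2).totalDegree_le⟩
        : restrictTotalDegree (Fin 3) F d)) ?_
    intro a b hab
    exact Subtype.ext (congrArg Subtype.val hab :)
  set Q : (Fin (q ^ 2 + q + 1) → F) → Prop :=
    fun v => (∀ i : Fin (q ^ 2 + q + 1), (i : ℕ) < t → v i = 0) ∧
      (∀ i : Fin (q ^ 2 + q + 1), t ≤ (i : ℕ) → v i ≠ 0) with hQ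
  set K := Nat.card (LinearMap.ker φ) with hKdef
  haveI : Nonempty (LinearMap.ker φ) := ⟨0⟩
  have hK0 : K ≠ 0 := Nat.card_pos.ne'
  -- numerator
  have e1 : {G : MvPolynomial (Fin 3) F // G.IsHomogeneous d ∧
        (∀ i : Fin (q ^ 2 + q + 1), (i : ℕ) < t → eval (P i).rep G = 0) ∧
        (∀ i : Fin (q ^ 2 + q + 1), t ≤ (i : ℕ) → eval (P i).rep G ≠ 0)}
      ≃ {x : M // Q (φ x)} :=
    { toFun := fun G => ⟨⟨G.1, (mem_homogeneousSubmodule _ _).2 G.2.1⟩, G.2.2.1, G.2.2.2⟩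
      invFun := fun x => ⟨x.1.1, (mem_homogeneousSubmodule _ _).1 x.1.2, x.2.1, x.2.2⟩
      left_inv := fun _ => rfl
      right_inv := fun _ => rfl }
  have hcard1 : Nat.card {G : MvPolynomial (Fin 3) F // G.IsHomogeneous d ∧
        (∀ i : Fin (q ^ 2 + q + 1), (i : ℕ) < t → eval (P i).rep G = 0) ∧
        (∀ i : Fin (q ^ 2 + q + 1), t ≤ (i : ℕ) → eval (P i).rep G ≠ 0)}
      = K * Nat.card {v : Fin (q ^ 2 + q + 1) → F // Q v} := by
    rw [Nat.card_congr e1, card_fiber_eq φ hφs Q]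
  -- denominator
  have e2 : {G : MvPolynomial (Fin 3) F // G.IsHomogeneous d}
      ≃ {x : M // (fun _ => True) (φ x)} :=
    { toFun := fun G => ⟨⟨G.1, (mem_homogeneousSubmodule _ _).2 G.2⟩, trivial⟩
      invFun := fun x => ⟨x.1.1, (mem_homogeneousSubmodule _ _).1 x.1.2⟩
      left_inv := fun _ => rfl
      right_inv := fun _ => rfl }
  have hcard2 : Nat.card {G : MvPolynomial (Fin 3) F // G.IsHomogeneous d}
      = K * q ^ (q ^ 2 + q + 1) := by
    rw [Nat.card_congr e2, card_fiber_eq φ hφs (fun _ => True)]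
    congr 1
    rw [Nat.card_congr (Equiv.subtypeUnivEquiv fun _ => trivial), Nat.card_pi]
    simp [Nat.card_eq_fintype_card, hq]
  -- the set of prescribed value vectors
  have hcard3 : Nat.card {v : Fin (q ^ 2 + q + 1) → F // Q v}
      = (q - 1) ^ (q ^ 2 + q + 1 - t) := by
    have e3 : {v : Fin (q ^ 2 + q + 1) → F // Q v} ≃
        ∀ i : Fin (q ^ 2 + q + 1), {x : F // ((i : ℕ) < t → x = 0) ∧ (t ≤ (i : ℕ) → x ≠ 0)} := by
      refine (Equiv.subtypeEquivRight ?_).trans Equiv.subtypePiEquivPi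
      intro v
      constructor
      · rintro ⟨h1, h2⟩ i; exact ⟨h1 i, h2 i⟩
      · intro h; exact ⟨fun i => (h i).1, fun i => (h i).2⟩
    rw [Nat.card_congr e3, Nat.card_pi]
    have hfac : ∀ i : Fin (q ^ 2 + q + 1),
        Nat.card {x : F // ((i : ℕ) < t → x = 0) ∧ (t ≤ (i : ℕ) → x ≠ 0)}
        = if (i : ℕ) < t then 1 else q - 1 := by
      intro i
      by_cases hi : (i : ℕ) < t
      · rw [if_pos hi, Nat.card_congr (Equiv.subtypeEquivRight (q := fun x : F => x = 0) ?_),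
          Nat.card_eq_fintype_card, Fintype.card_subtype_eq]
        intro x
        constructor
        · rintro ⟨h1, _⟩; exact h1 hi
        · rintro rfl; exact ⟨fun _ => rfl, fun hti => absurd hi (by omega)⟩
      · rw [if_neg hi, Nat.card_congr (Equiv.subtypeEquivRight (q := fun x : F => ¬(x = 0)) ?_),
          Nat.card_eq_fintype_card, Fintype.card_subtype_compl, hq, Fintype.card_subtype_eq]
        intro x
        constructor
        · rintro ⟨_, h2⟩; exact h2 (le_of_not_gt hi)
        · intro hx; exact ⟨fun h => absurd h hi, fun _ => hx⟩
    rw [Finset.prod_congr rfl fun i _ => hfac i,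
      Fin.prod_univ_eq_prod_range (fun n => if n < t then 1 else q - 1) (q ^ 2 + q + 1),
      ← Finset.prod_range_mul_prod_Ico _ ht,
      Finset.prod_eq_one fun n hn => if_pos (Finset.mem_range.1 hn), one_mul,
      Finset.prod_congr rfl fun n hn => if_neg (not_lt.2 (Finset.mem_Ico.1 hn).1),
      Finset.prod_const, Nat.card_Ico]
  rw [hcard1, hcard2, hcard3, Nat.cast_mul, Nat.cast_mul, Nat.cast_pow, Nat.cast_pow,
    Nat.cast_sub hq1, Nat.cast_one]
  have hq0 : (q : ℚ) ≠ 0 := by positivity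
  have hKQ : (K : ℚ) ≠ 0 := Nat.cast_ne_zero.2 hK0
  rw [mul_div_mul_left _ _ hKQ]
  have hpow : (q : ℚ) ^ (q ^ 2 + q + 1) = q ^ t * q ^ (q ^ 2 + q + 1 - t) := by
    rw [← pow_add]; congr 1; omega
  rw [hpow, div_pow, div_pow, one_pow, div_mul_div_comm, one_mul]
end

section
/- For d > q^2 + q + 1, the number of F_q-points of the curve C_F for a uniformly random homogeneous polynomial F of degree d over F_q has the same distribution as Y_1 + ... + Y_{q^2+q+1}, where the Y_i are i.i.d. Bernoulli random variables taking value 1 with probability 1/q and value 0 with probability (q-1)/q. That is, for every 0 ≤ t ≤ q^2+q+1, #{F in S_d : #C_F(F_q) = t} / #S_d = C(q^2+q+1, t) · (1/q)^t · ((q-1)/q)^{q^2+q+1-t}. -/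
/-!
Evaluation at the `N = q² + q + 1` points of `ℙ²(𝔽_q)` is an `𝔽_q`-linear map from the space of
degree-`d` forms onto `𝔽_q ^ N` as soon as `d ≥ N - 1`: for each point `P`, a product of linear
forms, one vanishing at each of the other points but not at `P`, padded with a power of a
coordinate not vanishing at `P`, is a form of degree `d` supported exactly at `P`. A surjective
group homomorphism pushes the uniform distribution forward to the uniform distribution, so the
number of zeros of a random form is distributed like the number of zeros of a uniformly random
function `ℙ²(𝔽_q) → 𝔽_q`, which is binomial with parameters `N` and `1/q`.
-/

open Finset Function MvPolynomial
open scoped LinearAlgebra.Projectivization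

theorem AddMonoidHom.natCard_subtype_comp_div_natCard {G M F : Type*} [AddGroup G] [AddGroup M]
    [Finite G] [FunLike F G M] [AddMonoidHomClass F G M] (f : F) (hf : Surjective f)
    (p : M → Prop) :
    (Nat.card {g // p (f g)} : ℚ) / Nat.card G = Nat.card {m // p m} / Nat.card M := by
  classical
  have := Fintype.ofFinite G
  have : Finite M := Finite.of_surjective f hf
  have := Fintype.ofFinite M
  have hcount : ∀ r : M → Prop,
      Nat.card {g // r (f g)} = Nat.card {m // r m} * #{g | f g = 0} := by
    intro r
    simp only [Nat.card_eq_fintype_card, Fintype.card_subtype]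
    rw [card_eq_sum_card_fiberwise (f := f) (t := {m | r m}) fun g hg => by simpa using hg]
    refine sum_const_nat fun m hm => ?_
    rw [filter_filter, ← card_fiber_eq_of_mem_range f (hf m) (hf 0)]
    congr 1
    ext g
    simp only [mem_filter, mem_univ, true_and, and_iff_right_iff_imp]
    rintro rfl
    simpa using hm
  have hG := hcount fun _ => True
  simp only [Nat.card_subtype_true] at hG
  have hk : #{g | f g = 0} ≠ 0 := (card_pos.2 ⟨0, by simp⟩).ne'
  rw [hcount, hG, Nat.cast_mul, Nat.cast_mul, mul_div_mul_right _ _ (Nat.cast_ne_zero.2 hk)]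

theorem card_filter_fun_eq_iff_mem {α β : Type*} [Fintype α] [DecidableEq α] [Fintype β]
    [DecidableEq β] (b : β) (s : Finset α) :
    #{y : α → β | ∀ a, y a = b ↔ a ∈ s} = (Fintype.card β - 1) ^ (Fintype.card α - #s) := by
  have : ({y : α → β | ∀ a, y a = b ↔ a ∈ s} : Finset _) =
      Fintype.piFinset fun a => if a ∈ s then {b} else {b}ᶜ := by
    ext y
    simp only [mem_filter, mem_univ, true_and, Fintype.mem_piFinset]
    refine forall_congr' fun a => ?_
    split_ifs with ha <;> simp [ha]
  rw [this, Fintype.card_piFinset]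
  simp only [apply_ite card, card_singleton, card_compl, prod_ite, prod_const_one, one_mul,
    prod_const, filter_notMem_eq_sdiff, ← compl_eq_univ_sdiff]

theorem natCard_fun_card_fiber_eq {α β : Type*} [Finite α] [Finite β] (b : β) (t : ℕ) :
    Nat.card {y : α → β // Nat.card {a // y a = b} = t} =
      (Nat.card α).choose t * (Nat.card β - 1) ^ (Nat.card α - t) := by
  classical
  have := Fintype.ofFinite α
  have := Fintype.ofFinite β
  simp only [Nat.card_eq_fintype_card, Fintype.card_subtype]
  rw [card_eq_sum_card_fiberwise (f := fun y : α → β => ({a | y a = b} : Finset α))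
    (t := powersetCard t univ) fun y hy => by simpa using hy,
    sum_congr rfl (g := fun _ => (Fintype.card β - 1) ^ (Fintype.card α - t)), sum_const,
    card_powersetCard, card_univ, smul_eq_mul]
  intro s hs
  rw [mem_powersetCard] at hs
  rw [← hs.2, ← card_filter_fun_eq_iff_mem b s, filter_filter]
  congr 1
  ext y
  simp only [mem_filter, mem_univ, true_and, Finset.ext_iff, and_iff_right_iff_imp]
  intro h
  congr 1
  ext a
  simp [h]

theorem choose_mul_sub_one_pow_div_pow {K : Type*} [Field K] {x : K} (hx : x ≠ 0) (n t : ℕ) :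
    (n.choose t * (x - 1) ^ (n - t) : K) / x ^ n =
      n.choose t * (1 / x) ^ t * ((x - 1) / x) ^ (n - t) := by
  rcases le_or_gt t n with htn | htn
  · obtain ⟨k, rfl⟩ := Nat.exists_eq_add_of_le htn
    rw [Nat.add_sub_cancel_left, div_pow, div_pow, one_pow, pow_add]
    field_simp
  · simp [Nat.choose_eq_zero_of_lt htn]

theorem Projectivization.exists_dual_apply_rep_eq_zero_ne_zero {K V : Type*} [Field K]
    [AddCommGroup V] [Module K V] {P Q : ℙ K V} (h : Q ≠ P) :
    ∃ φ : Module.Dual K V, φ Q.rep = 0 ∧ φ P.rep ≠ 0 := by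
  have hP : P.rep ∉ K ∙ Q.rep := by
    rw [Submodule.mem_span_singleton]
    rintro ⟨a, ha⟩
    exact (LinearIndependent.pair_iff' Q.rep_nonzero).1 (linearIndependent_pair_iff_ne.2 h) a ha
  obtain ⟨φ, hφP, hφQ⟩ := Submodule.exists_dual_map_eq_bot_of_notMem hP inferInstance
  refine ⟨φ, ?_, hφP⟩
  simpa [hφQ] using Submodule.mem_map_of_mem (f := φ) (Submodule.mem_span_singleton_self Q.rep)

theorem Projectivization.natCard_fin_three (K : Type*) [Field K] [Finite K] :
    Nat.card (ℙ K (Fin 3 → K)) = Nat.card K ^ 2 + Nat.card K + 1 := by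
  rw [card_of_finrank K _ (Module.finrank_fin_fun K)]
  simp [sum_range_succ]
  ring

namespace MvPolynomial

variable {K σ : Type*} [Field K]

instance [Finite σ] [Finite K] (d : ℕ) : Finite (homogeneousSubmodule σ K d) :=
  have : Module.Finite K (homogeneousSubmodule σ K d) :=
    Module.Finite.iff_fg.2 (homogeneousSubmodule_fg _ _ d)
  Module.finite_of_finite K

variable (K σ) in
noncomputable def evalAtReps : MvPolynomial σ K →ₗ[K] ℙ K (σ → K) → K where
  toFun G P := eval P.rep G
  map_add' G H := by ext; simp
  map_smul' c G := by ext; simp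

variable [Fintype σ]

theorem exists_isHomogeneous_one_eval_eq_zero_ne_zero {P Q : ℙ K (σ → K)} (h : Q ≠ P) :
    ∃ L : MvPolynomial σ K, L.IsHomogeneous 1 ∧ eval Q.rep L = 0 ∧ eval P.rep L ≠ 0 := by
  classical
  obtain ⟨φ, hQ, hP⟩ := Projectivization.exists_dual_apply_rep_eq_zero_ne_zero h
  have heval : ∀ v, eval v (∑ i, C (φ (Pi.single i 1)) * X i) = φ v := by
    intro v
    conv_rhs => rw [← univ_sum_single v]
    simp only [map_sum, map_mul, eval_C, eval_X]
    refine sum_congr rfl fun i _ => ?_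
    rw [mul_comm, ← smul_eq_mul, ← map_smul, ← Pi.single_smul', smul_eq_mul, mul_one]
  exact ⟨_, IsHomogeneous.sum _ _ _ fun i _ => isHomogeneous_C_mul_X _ i, by rw [heval, hQ],
    by rwa [heval]⟩

theorem exists_isHomogeneous_eval_ne_zero_of_notMem (P : ℙ K (σ → K))
    (S : Finset (ℙ K (σ → K))) (hP : P ∉ S) {d : ℕ} (hd : #S ≤ d) :
    ∃ G : MvPolynomial σ K, G.IsHomogeneous d ∧ eval P.rep G ≠ 0 ∧ ∀ R ∈ S, eval R.rep G = 0 := by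
  classical
  induction S using Finset.induction_on generalizing d with
  | empty =>
    obtain ⟨i, hi⟩ : ∃ i, P.rep i ≠ 0 := Function.ne_iff.mp P.rep_nonzero
    exact ⟨X i ^ d, isHomogeneous_X_pow i d, by simpa using pow_ne_zero d hi, by simp⟩
  | insert R S hRS ih =>
    obtain ⟨d, rfl⟩ : ∃ e, d = e + 1 := Nat.exists_eq_add_one.2 (by grind [card_insert_of_notMem])
    obtain ⟨L, hL, hLR, hLP⟩ := exists_isHomogeneous_one_eval_eq_zero_ne_zero (P := P) (Q := R)
      (by grind)
    obtain ⟨G, hG, hGP, hGS⟩ := ih (by grind) (d := d) (by grind [card_insert_of_notMem])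
    refine ⟨L * G, by simpa [add_comm] using hL.mul hG, by simp [hLP, hGP], ?_⟩
    intro R' hR'
    rcases mem_insert.1 hR' with rfl | hR'
    · simp [hLR]
    · simp [hGS R' hR']

theorem map_homogeneousSubmodule_evalAtReps [Finite K] {d : ℕ}
    (hd : Nat.card (ℙ K (σ → K)) ≤ d + 1) :
    (homogeneousSubmodule σ K d).map (evalAtReps K σ) = ⊤ := by
  classical
  have := Fintype.ofFinite (ℙ K (σ → K))
  have hsingle : ∀ P a, Pi.single P a ∈ (homogeneousSubmodule σ K d).map (evalAtReps K σ) := by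
    intro P a
    have hcard : #(univ.erase P) ≤ d := by
      rw [card_erase_of_mem (mem_univ P), card_univ, ← Nat.card_eq_fintype_card]
      omega
    obtain ⟨G, hG, hGP, hGS⟩ :=
      exists_isHomogeneous_eval_ne_zero_of_notMem P (univ.erase P) (notMem_erase P univ) hcard
    refine ⟨(a / eval P.rep G) • G, Submodule.smul_mem _ _ hG, ?_⟩
    ext R
    by_cases hR : R = P
    · subst hR
      simp [evalAtReps, hGP]
    · simp [evalAtReps, hR, hGS R (mem_erase.2 ⟨hR, mem_univ R⟩)]
  refine eq_top_iff.2 fun y _ => ?_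
  rw [← univ_sum_single y]
  exact Submodule.sum_mem _ fun P _ => hsingle P (y P)

end MvPolynomial

theorem point_count_distribution_all_curves_general (F : Type*) [Field F] [Fintype F]
    (q : ℕ) (hq : Fintype.card F = q)
    (d t : ℕ) (hd : q ^ 2 + q + 1 < d) :
    (Nat.card {G : MvPolynomial (Fin 3) F // G.IsHomogeneous d ∧
        Nat.card {Pt : Projectivization F (Fin 3 → F) // eval Pt.rep G = 0} = t} : ℚ) /
      (Nat.card {G : MvPolynomial (Fin 3) F // G.IsHomogeneous d} : ℚ)
    = (Nat.choose (q ^ 2 + q + 1) t : ℚ) * (1 / q) ^ t *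
        ((q - 1) / q) ^ (q ^ 2 + q + 1 - t) := by
  have hq1 : 1 ≤ q := hq ▸ Fintype.card_pos
  have hN : Nat.card (ℙ F (Fin 3 → F)) = q ^ 2 + q + 1 := by
    rw [Projectivization.natCard_fin_three, Nat.card_eq_fintype_card, hq]
  have hsurj :
      Surjective ((evalAtReps F (Fin 3)).domRestrict (homogeneousSubmodule (Fin 3) F d)) := by
    rw [← LinearMap.range_eq_top, LinearMap.range_domRestrict]
    exact map_homogeneousSubmodule_evalAtReps (by omega)
  calc _ = (Nat.card {y : ℙ F (Fin 3 → F) → F // Nat.card {P // y P = 0} = t} : ℚ) /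
        Nat.card (ℙ F (Fin 3 → F) → F) := by
        rw [← AddMonoidHom.natCard_subtype_comp_div_natCard _ hsurj, ← Nat.card_congr
          (Equiv.subtypeSubtypeEquivSubtypeInter (·.IsHomogeneous d)
            fun G => Nat.card {P : ℙ F (Fin 3 → F) // eval P.rep G = 0} = t)]
        rfl
    _ = _ := by
      rw [natCard_fun_card_fiber_eq, Nat.card_fun, hN, Nat.card_eq_fintype_card, hq, Nat.cast_mul,
        Nat.cast_pow, Nat.cast_pow, Nat.cast_sub hq1, Nat.cast_one]
      exact choose_mul_sub_one_pow_div_pow (by positivity) _ _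

/-- For `d > q² + q + 1`, the number of `F_q`-points of the plane curve `C_F` for a
uniformly random homogeneous degree-`d` form `F` is binomially distributed:
for every `0 ≤ t ≤ q²+q+1`,
`#{F ∈ S_d : #C_F(F_q) = t} / #S_d = C(q²+q+1, t)·(1/q)^t·((q-1)/q)^{q²+q+1-t}`. -/
theorem point_count_distribution_all_curves (F : Type*) [Field F] [Fintype F]
    (q : ℕ) (hq : Fintype.card F = q)
    (d t : ℕ) (hd : q ^ 2 + q + 1 < d) (ht : t ≤ q ^ 2 + q + 1) :
    (Nat.card {G : MvPolynomial (Fin 3) F // G.IsHomogeneous d ∧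
        Nat.card {Pt : Projectivization F (Fin 3 → F) // eval Pt.rep G = 0} = t} : ℚ) /
      (Nat.card {G : MvPolynomial (Fin 3) F // G.IsHomogeneous d} : ℚ)
    = (Nat.choose (q ^ 2 + q + 1) t : ℚ) * (1 / q) ^ t *
        ((q - 1) / q) ^ (q ^ 2 + q + 1 - t) :=
  point_count_distribution_all_curves_general F q hq d t hd
end

section
/- Let q be a prime power, P a closed point of P^2 over F_q of degree e, and d an integer with 3e ≤ d. Let S_d be the space of homogeneous degree-d forms over F_q. Then the fraction of F ∈ S_d such that the curve C_F fails to be smooth of dimension 1 at P (i.e., F and both dehomogenized partial derivatives vanish at P) equals q^{-3e}. -/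
/-!
Put `P = [v]` in the chart `X_c = 1`. The map `G ↦ (G(v), (∂ᵢG(v))_{i ≠ c})` is `F`-linear from
degree-`d` forms to `K³`, and by Euler's identity `∑ vᵢ ∂ᵢG = d G` its kernel is exactly the set of
forms singular at `P`. It is surjective once `d ≥ 3e`. First, values at `v` of forms of degree `D`
exhaust `K` as soon as `D ≥ 2(e - 1)`, because `K = F[v_{i₁}] · F[v_{i₂}]` and each factor is
spanned by powers of exponent `< e`. Second, the homogenised minimal polynomial of `vᵢ` vanishes at
`v`, its `i`-th partial derivative does not (separability), and the other affine partials vanish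
identically, so its multiples of degree `d` realise any prescribed `i`-th derivative. Hence the
kernel has index `|K|³ = q^{3e}`.
-/

open MvPolynomial

section Values

variable {σ F K : Type*} [Field F] [Field K] [Algebra F K]

variable (F) in
noncomputable def homogeneousValues (v : σ → K) (D : ℕ) : Submodule F K :=
  (homogeneousSubmodule σ F D).map (aeval v).toLinearMap

lemma homogeneousValues_mul_le (v : σ → K) (a b : ℕ) :
    homogeneousValues F v a * homogeneousValues F v b ≤ homogeneousValues F v (a + b) := by
  rw [homogeneousValues, homogeneousValues, ← Submodule.map_mul]
  exact Submodule.map_mono (homogeneousSubmodule_mul a b)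

lemma pow_mem_homogeneousValues (v : σ → K) (i : σ) (k : ℕ) :
    v i ^ k ∈ homogeneousValues F v k :=
  ⟨X i ^ k, isHomogeneous_X_pow i k, by simp⟩

variable {v : σ → K} {c : σ}

lemma one_mem_homogeneousValues (hvc : v c = 1) (D : ℕ) : 1 ∈ homogeneousValues F v D := by
  simpa [hvc] using pow_mem_homogeneousValues (F := F) v c D

lemma homogeneousValues_mono (hvc : v c = 1) : Monotone (homogeneousValues F v) := by
  intro a b hab x hx
  obtain ⟨k, rfl⟩ := Nat.exists_eq_add_of_le hab
  simpa using homogeneousValues_mul_le v a k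
    (Submodule.mul_mem_mul hx (one_mem_homogeneousValues hvc k))

lemma adjoin_singleton_le_homogeneousValues [FiniteDimensional F K] (hvc : v c = 1) (i : σ) :
    Subalgebra.toSubmodule (Algebra.adjoin F {v i}) ≤
      homogeneousValues F v (Module.finrank F K - 1) := by
  intro x hx
  have hx' : ∃ f : Polynomial F, x = Polynomial.aeval (v i) f := by
    rw [Algebra.adjoin_singleton_eq_range_aeval] at hx
    obtain ⟨f, rfl⟩ := hx
    exact ⟨f, rfl⟩
  refine Submodule.span_le.mpr ?_ ((IsIntegral.of_finite F (v i)).mem_span_pow hx')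
  rintro _ ⟨k, rfl⟩
  have hk : (k : ℕ) ≤ Module.finrank F K - 1 := by
    have := minpoly.natDegree_le (A := F) (v i)
    omega
  exact homogeneousValues_mono hvc hk (pow_mem_homogeneousValues v i k)

lemma adjoin_image_le_homogeneousValues [FiniteDimensional F K] (hvc : v c = 1) (s : Finset σ) :
    Subalgebra.toSubmodule (Algebra.adjoin F (v '' s)) ≤
      homogeneousValues F v (s.card * (Module.finrank F K - 1)) := by
  classical
  induction s using Finset.induction_on with
  | empty =>
    simpa [Algebra.toSubmodule_bot, Submodule.one_le] using one_mem_homogeneousValues hvc 0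
  | insert i s hi ih =>
    rw [Finset.coe_insert, Set.image_insert_eq, Set.insert_eq, Algebra.adjoin_union_coe_submodule,
      Finset.card_insert_of_notMem hi, Nat.succ_mul, add_comm]
    exact (mul_le_mul' (adjoin_singleton_le_homogeneousValues hvc i) ih).trans
      (homogeneousValues_mul_le v _ _)

lemma homogeneousValues_eq_top [Fintype σ] [FiniteDimensional F K] (hvc : v c = 1)
    (hgen : Algebra.adjoin F (Set.range v) = ⊤) {D : ℕ}
    (hD : (Fintype.card σ - 1) * (Module.finrank F K - 1) ≤ D) :
    homogeneousValues F v D = ⊤ := by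
  classical
  have hrange : Algebra.adjoin F (v '' ↑(Finset.univ.erase c)) = ⊤ := by
    refine top_unique (hgen ▸ Algebra.adjoin_le ?_)
    rintro _ ⟨i, rfl⟩
    by_cases hi : i = c
    · rw [hi, hvc]; exact Subalgebra.one_mem _
    · exact Algebra.subset_adjoin ⟨i, by simp [hi], rfl⟩
  have hcard : (Finset.univ.erase c).card = Fintype.card σ - 1 := by
    rw [Finset.card_erase_of_mem (Finset.mem_univ c), Finset.card_univ]
  refine top_unique ?_
  have := adjoin_image_le_homogeneousValues (F := F) hvc (Finset.univ.erase c)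
  rw [hrange, hcard, Algebra.top_toSubmodule] at this
  exact this.trans (homogeneousValues_mono hvc hD)

lemma exists_isHomogeneous_aeval_eq [Fintype σ] [FiniteDimensional F K] (hvc : v c = 1)
    (hgen : Algebra.adjoin F (Set.range v) = ⊤) {D : ℕ}
    (hD : (Fintype.card σ - 1) * (Module.finrank F K - 1) ≤ D) (κ : K) :
    ∃ U : MvPolynomial σ F, U.IsHomogeneous D ∧ aeval v U = κ := by
  obtain ⟨U, hU, hUv⟩ : κ ∈ homogeneousValues F v D := by
    rw [homogeneousValues_eq_top hvc hgen hD]; trivial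
  exact ⟨U, hU, hUv⟩

end Values

lemma Polynomial.aeval_pderiv_zero_homogenize_of_eq_one {R A : Type*} [CommRing R] [CommRing A]
    [Algebra R A] {p : Polynomial R} {n : ℕ} (hn : p.natDegree ≤ n) (g : Fin 2 → A) (hg : g 1 = 1) :
    MvPolynomial.aeval g (pderiv 0 (p.homogenize n)) = aeval (g 0) (derivative p) := by
  refine Polynomial.induction_with_natDegree_le
    (fun p => MvPolynomial.aeval g (pderiv 0 (p.homogenize n)) = aeval (g 0) (derivative p))
    n (by simp) (fun k r _ hk => ?_) (fun p q _ _ hp hq => by simp [hp, hq]) p hn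
  simp [hk, hg, pderiv_X, derivative_X_pow]

section Homogenize

variable {σ F K : Type*} [Field F] [Field K] [Algebra F K]

noncomputable def homogenizeAt (i c : σ) (p : Polynomial F) : MvPolynomial σ F :=
  rename ![i, c] (p.homogenize p.natDegree)

lemma isHomogeneous_homogenizeAt (i c : σ) (p : Polynomial F) :
    (homogenizeAt i c p).IsHomogeneous p.natDegree :=
  (p.isHomogeneous_homogenize).rename_isHomogeneous

variable {v : σ → K} {c : σ}

lemma aeval_homogenizeAt (hvc : v c = 1) (i : σ) (p : Polynomial F) :
    aeval v (homogenizeAt i c p) = Polynomial.aeval (v i) p := by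
  rw [homogenizeAt, aeval_rename, Polynomial.aeval_homogenize_of_eq_one le_rfl] <;> simp [hvc]

lemma pderiv_homogenizeAt_of_ne {i j : σ} (hji : j ≠ i) (hjc : j ≠ c) (p : Polynomial F) :
    pderiv j (homogenizeAt i c p) = 0 := by
  classical
  refine pderiv_eq_zero_of_notMem_vars fun hj => ?_
  obtain ⟨k, -, hk⟩ := Finset.mem_image.mp (vars_rename _ _ hj)
  fin_cases k
  exacts [hji hk.symm, hjc hk.symm]

lemma aeval_pderiv_homogenizeAt_self (hvc : v c = 1) {i : σ} (hic : i ≠ c) (p : Polynomial F) :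
    aeval v (pderiv i (homogenizeAt i c p)) =
      Polynomial.aeval (v i) (Polynomial.derivative p) := by
  have hinj : Function.Injective ![i, c] := by
    intro a b; fin_cases a <;> fin_cases b <;> simp [hic, hic.symm]
  have hrename := pderiv_rename hinj 0 (p.homogenize p.natDegree)
  rw [Matrix.cons_val_zero] at hrename
  rw [homogenizeAt, hrename, aeval_rename,
    Polynomial.aeval_pderiv_zero_homogenize_of_eq_one le_rfl] <;> simp [hvc]

end Homogenize

lemma MvPolynomial.IsHomogeneous.aeval_pderiv_eq_zero {σ F K : Type*} [Fintype σ]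
    [CommRing F] [CommRing K] [Algebra F K] {G : MvPolynomial σ F} {d : ℕ}
    (hG : G.IsHomogeneous d) {v : σ → K} {c : σ} (hvc : v c = 1) (h0 : MvPolynomial.aeval v G = 0)
    (hne : ∀ i, i ≠ c → MvPolynomial.aeval v (pderiv i G) = 0) (i : σ) :
    MvPolynomial.aeval v (pderiv i G) = 0 := by
  obtain rfl | hic := eq_or_ne i c
  · have euler := congrArg (MvPolynomial.aeval v) hG.sum_X_mul_pderiv
    rw [map_sum, map_nsmul, h0, smul_zero,
      Finset.sum_eq_single_of_mem i (Finset.mem_univ i) fun j _ hj => by simp [hne j hj]] at euler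
    simpa [hvc] using euler
  · exact hne i hic

section Jet

variable {σ F K : Type*} [Field F] [Field K] [Algebra F K]

/-- The image of a form in `O_P / m_P²`, in the affine chart `X_c = 1`. -/
noncomputable def firstJet (v : σ → K) (c : σ) (d : ℕ) :
    homogeneousSubmodule σ F d →ₗ[F] K × ({i // i ≠ c} → K) :=
  ((aeval v).toLinearMap ∘ₗ Submodule.subtype _).prod
    (LinearMap.pi fun i => (aeval v).toLinearMap ∘ₗ (pderiv i.1).toLinearMap ∘ₗ Submodule.subtype _)

lemma firstJet_apply (v : σ → K) (c : σ) (d : ℕ) (G : homogeneousSubmodule σ F d) :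
    firstJet v c d G = (aeval v G.1, fun i => aeval v (pderiv i.1 G.1)) := rfl

variable {v : σ → K} {c : σ}

lemma firstJet_eq_zero_iff [Fintype σ] (hvc : v c = 1) {d : ℕ} (G : homogeneousSubmodule σ F d) :
    firstJet v c d G = 0 ↔ aeval v G.1 = 0 ∧ ∀ i, aeval v (pderiv i G.1) = 0 := by
  simp only [firstJet_apply, Prod.mk_eq_zero, funext_iff, Pi.zero_apply, Subtype.forall]
  exact and_congr_right fun h0 =>
    ⟨((mem_homogeneousSubmodule d _).mp G.2).aeval_pderiv_eq_zero hvc h0, fun h i _ => h i⟩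

end Jet

section Surjective

variable {σ F K : Type*} [Fintype σ] [Field F] [Field K] [Algebra F K] [FiniteDimensional F K]
  {v : σ → K} {c : σ}

lemma exists_isHomogeneous_pderiv_single [Algebra.IsSeparable F K] (hvc : v c = 1)
    (hgen : Algebra.adjoin F (Set.range v) = ⊤) {m : ℕ}
    (hm : (Fintype.card σ - 1) * (Module.finrank F K - 1) + Module.finrank F K ≤ m)
    {i : σ} (hic : i ≠ c) (κ : K) :
    ∃ H : MvPolynomial σ F, H.IsHomogeneous m ∧ aeval v H = 0 ∧
      aeval v (pderiv i H) = κ ∧ ∀ j, j ≠ i → j ≠ c → aeval v (pderiv j H) = 0 := by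
  set p := minpoly F (v i)
  have hp : p.natDegree ≤ Module.finrank F K := minpoly.natDegree_le (v i)
  have hp0 : Polynomial.aeval (v i) p = 0 := minpoly.aeval F (v i)
  have hδ : Polynomial.aeval (v i) (Polynomial.derivative p) ≠ 0 :=
    (Algebra.IsSeparable.isSeparable F (v i)).aeval_derivative_ne_zero hp0
  obtain ⟨U, hU, hUv⟩ := exists_isHomogeneous_aeval_eq hvc hgen (D := m - p.natDegree) (by omega)
    (κ / Polynomial.aeval (v i) (Polynomial.derivative p))
  refine ⟨homogenizeAt i c p * U, ?_, ?_, ?_, fun j hji hjc => ?_⟩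
  · simpa [Nat.add_sub_cancel' (hp.trans (le_of_add_le_right hm))] using
      (isHomogeneous_homogenizeAt i c p).mul hU
  · simp [aeval_homogenizeAt hvc, hp0]
  · simp [aeval_homogenizeAt hvc, aeval_pderiv_homogenizeAt_self hvc hic, hp0, hUv, hδ]
  · simp [pderiv_homogenizeAt_of_ne hji hjc, aeval_homogenizeAt hvc, hp0]

lemma firstJet_surjective [Algebra.IsSeparable F K] (hvc : v c = 1)
    (hgen : Algebra.adjoin F (Set.range v) = ⊤) {d : ℕ}
    (hd : (Fintype.card σ - 1) * (Module.finrank F K - 1) + Module.finrank F K ≤ d) :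
    Function.Surjective (firstJet (F := F) v c d) := by
  classical
  rintro ⟨a, b⟩
  obtain ⟨U, hU, hUv⟩ := exists_isHomogeneous_aeval_eq hvc hgen (D := d) (by omega) a
  choose H hH hHv hHi hHj using fun i : {i // i ≠ c} =>
    exists_isHomogeneous_pderiv_single hvc hgen hd i.2 (b i - aeval v (pderiv i.1 U))
  refine ⟨⟨U + ∑ i, H i, Submodule.add_mem _ hU (Submodule.sum_mem _ fun i _ => hH i)⟩, ?_⟩
  rw [firstJet_apply]
  ext j
  · simp [hUv, hHv]
  · simp only [map_add, map_sum]
    rw [Finset.sum_eq_single j (fun i _ hij => hHj i j.1 (Subtype.coe_ne_coe.mpr hij.symm) j.2)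
      (by simp), hHi]
    ring

end Surjective

lemma finite_isHomogeneous (σ F : Type*) [Finite σ] [Field F] [Finite F] (d : ℕ) :
    Finite {G : MvPolynomial σ F // G.IsHomogeneous d} := by
  have : Finite (restrictTotalDegree σ F d) := Module.finite_of_finite F
  refine Finite.of_injective (β := restrictTotalDegree σ F d)
    (fun G => ⟨G.1, (mem_restrictTotalDegree σ d G.1).mpr G.2.totalDegree_le⟩) fun G H h => ?_
  exact Subtype.ext (Subtype.mk.inj h)

lemma card_singular_mul_card_pow {σ F K : Type*} [Fintype σ] [Field F] [Field K] [Algebra F K]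
    [FiniteDimensional F K] [Algebra.IsSeparable F K] {v : σ → K} {c : σ} (hvc : v c = 1)
    (hgen : Algebra.adjoin F (Set.range v) = ⊤) {d : ℕ}
    (hd : (Fintype.card σ - 1) * (Module.finrank F K - 1) + Module.finrank F K ≤ d) :
    Nat.card {G : MvPolynomial σ F // G.IsHomogeneous d ∧
        aeval v G = 0 ∧ ∀ i, aeval v (pderiv i G) = 0} * Nat.card K ^ Fintype.card σ =
      Nat.card {G : MvPolynomial σ F // G.IsHomogeneous d} := by
  classical
  have hker : Nat.card (LinearMap.ker (firstJet (F := F) v c d)) =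
      Nat.card {G : MvPolynomial σ F // G.IsHomogeneous d ∧
        aeval v G = 0 ∧ ∀ i, aeval v (pderiv i G) = 0} :=
    Nat.card_congr <| (Equiv.subtypeEquivRight fun G => firstJet_eq_zero_iff hvc G).trans
      (Equiv.subtypeSubtypeEquivSubtypeInter (· ∈ homogeneousSubmodule σ F d)
        fun G => aeval v G = 0 ∧ ∀ i, aeval v (pderiv i G) = 0)
  have hquot : Nat.card (homogeneousSubmodule σ F d ⧸ LinearMap.ker (firstJet (F := F) v c d)) =
      Nat.card K ^ Fintype.card σ := by
    rw [Nat.card_congr (LinearMap.quotKerEquivOfSurjective _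
      (firstJet_surjective hvc hgen hd)).toEquiv, Nat.card_prod, Nat.card_fun,
      Nat.card_eq_fintype_card (α := {i // i ≠ c}), Fintype.card_subtype_compl,
      Fintype.card_subtype_eq, ← pow_succ', Nat.sub_add_cancel (Fintype.card_pos_iff.mpr ⟨c⟩)]
  rw [← hker, ← hquot, ← Submodule.card_eq_card_quotient_mul_card]
  rfl

theorem singular_at_closed_point_density_general (F K : Type*) [Field F] [Fintype F]
    [Field K] [Fintype K] [Algebra F K]
    (q e : ℕ) (hq : Fintype.card F = q) (hK : Fintype.card K = q ^ e)
    (v : Fin 3 → K) (c : Fin 3) (hvc : v c = 1)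
    (hgen : Algebra.adjoin F (Set.range v) = ⊤)
    (d : ℕ) (hd : 3 * e ≤ d) :
    (Nat.card {G : MvPolynomial (Fin 3) F // G.IsHomogeneous d ∧
        aeval v G = 0 ∧ ∀ i : Fin 3, aeval v (pderiv i G) = 0} : ℚ) /
      (Nat.card {G : MvPolynomial (Fin 3) F // G.IsHomogeneous d} : ℚ)
    = ((q : ℚ) ^ (3 * e))⁻¹ := by
  have hrank : Module.finrank F K = e := by
    have hcard := Module.card_eq_pow_finrank (K := F) (V := K)
    rw [hq, hK] at hcard
    exact Nat.pow_right_injective (hq ▸ Fintype.one_lt_card) hcard.symm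
  have hcount := card_singular_mul_card_pow (F := F) hvc hgen (d := d)
    (by rw [hrank, Fintype.card_fin]; omega)
  have := finite_isHomogeneous (Fin 3) F d
  have : Nonempty {G : MvPolynomial (Fin 3) F // G.IsHomogeneous d} :=
    ⟨⟨0, isHomogeneous_zero _ _ d⟩⟩
  have hden : Nat.card {G : MvPolynomial (Fin 3) F // G.IsHomogeneous d} ≠ 0 := Nat.card_pos.ne'
  rw [← hcount, Nat.card_eq_fintype_card (α := K), hK, Fintype.card_fin] at hden ⊢
  have hnum := left_ne_zero_of_mul hden
  push_cast
  field_simp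
  ring

/-- Poonen's Lemma 2.3 (`n = m = 2`): let `P` be a closed point of `ℙ²` over `F_q`
of degree `e` and `d ≥ 3e`.  Then the fraction of homogeneous degree-`d` forms `G`
such that the curve `C_G` fails to be smooth of dimension `1` at `P` (i.e. `G` and
its partial derivatives vanish at `P`) equals `q^{-3e}`.

The closed point of degree `e` is given by a point of `ℙ²(F_{q^e})` with residue
field `F_{q^e}`: a representative `v` normalized so that `v c = 1` in some chart
`c`, whose coordinates generate `F_{q^e}` over `F_q`. -/
theorem singular_at_closed_point_density (F K : Type*) [Field F] [Fintype F]
    [Field K] [Fintype K] [Algebra F K]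
    (q e : ℕ) (hq : Fintype.card F = q) (hK : Fintype.card K = q ^ e) (he : 1 ≤ e)
    (v : Fin 3 → K) (c : Fin 3) (hvc : v c = 1)
    (hgen : Algebra.adjoin F (Set.range v) = ⊤)
    (d : ℕ) (hd : 3 * e ≤ d) :
    (Nat.card {G : MvPolynomial (Fin 3) F // G.IsHomogeneous d ∧
        aeval v G = 0 ∧ ∀ i : Fin 3, aeval v (pderiv i G) = 0} : ℚ) /
      (Nat.card {G : MvPolynomial (Fin 3) F // G.IsHomogeneous d} : ℚ)
    = ((q : ℚ) ^ (3 * e))⁻¹ :=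
  singular_at_closed_point_density_general F K q e hq hK v c hvc hgen d hd
end

section
/- Let P be a closed point of the affine plane A^2 over F_q of degree e, and let A_{≤d} denote the F_q-vector space of polynomials in F_q[x_1,x_2] of total degree at most d. Then the fraction of f ∈ A_{≤d} with f(P) = 0 is at most q^{−min(d+1, e)}. -/
open MvPolynomial

namespace PoonenAux

variable {F K : Type*} [Field F] [Field K] [Algebra F K]

/-- span of monomials in `v 0, v 1` of total degree `≤ j` -/
noncomputable def W (v : Fin 2 → K) (j : ℕ) : Submodule F K :=
  Submodule.span F ((fun p : ℕ × ℕ => v 0 ^ p.1 * v 1 ^ p.2) '' {p | p.1 + p.2 ≤ j})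

variable (v : Fin 2 → K)

lemma gen_mem {a b j : ℕ} (h : a + b ≤ j) : v 0 ^ a * v 1 ^ b ∈ W (F := F) v j :=
  Submodule.subset_span ⟨(a, b), h, rfl⟩

lemma W_mono {j k : ℕ} (h : j ≤ k) : W (F := F) v j ≤ W v k :=
  Submodule.span_mono (Set.image_mono fun p hp => le_trans hp h)

lemma one_mem_W (j : ℕ) : (1 : K) ∈ W (F := F) v j := by
  simpa using gen_mem (F := F) v (a := 0) (b := 0) (Nat.zero_le j)

lemma W_mul_W (j k : ℕ) : W (F := F) v j * W v k ≤ W v (j + k) := by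
  rw [W, W, Submodule.span_mul_span]
  refine Submodule.span_le.2 ?_
  rintro _ ⟨_, ⟨⟨a, b⟩, hab, rfl⟩, _, ⟨⟨c, d⟩, hcd, rfl⟩, rfl⟩
  refine Submodule.subset_span ⟨(a + c, b + d), ?_, ?_⟩
  · simp only [Set.mem_setOf_eq] at *; omega
  · simp only [pow_add]; ring

lemma v_mem_W1 (i : Fin 2) : v i ∈ W (F := F) v 1 := by
  fin_cases i
  · simpa using gen_mem (F := F) v (a := 1) (b := 0) le_rfl
  · simpa using gen_mem (F := F) v (a := 0) (b := 1) le_rfl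

lemma W_succ_le (j : ℕ) :
    W (F := F) v (j + 1) ≤ W v j ⊔ W v 1 * W v j := by
  refine Submodule.span_le.2 ?_
  rintro _ ⟨⟨a, b⟩, hab, rfl⟩
  simp only [Set.mem_setOf_eq] at hab
  show v 0 ^ a * v 1 ^ b ∈ _
  rcases Nat.lt_or_ge (a + b) (j + 1) with h | h
  · exact Submodule.mem_sup_left (gen_mem v (by omega))
  · refine Submodule.mem_sup_right ?_
    cases a with
    | zero =>
      have hb : b = j + 1 := by omega
      have : v 0 ^ 0 * v 1 ^ b = v 1 * (v 0 ^ 0 * v 1 ^ j) := by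
        subst hb; simp [pow_succ]; ring
      rw [this]
      exact Submodule.mul_mem_mul (v_mem_W1 v 1) (gen_mem v (by omega))
    | succ a =>
      have : v 0 ^ (a + 1) * v 1 ^ b = v 0 * (v 0 ^ a * v 1 ^ b) := by
        rw [pow_succ]; ring
      rw [this]
      exact Submodule.mul_mem_mul (v_mem_W1 v 0) (gen_mem v (by omega))

lemma W_stab {j : ℕ} (h : W (F := F) v j = W v (j + 1)) :
    ∀ k, W (F := F) v (j + k) = W v j := by
  intro k
  induction k with
  | zero => rfl
  | succ k ih =>
    refine le_antisymm ?_ (W_mono v (by omega))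
    calc W (F := F) v (j + k + 1) ≤ W v (j + k) ⊔ W v 1 * W v (j + k) := W_succ_le v _
      _ ≤ W v j ⊔ W v 1 * W v j := by
          rw [ih]
      _ ≤ W v j := by
          refine sup_le le_rfl (le_trans (W_mul_W v 1 j) ?_)
          rw [show 1 + j = j + 1 by omega, ← h]

lemma W_top (hgen : Algebra.adjoin F (Set.range v) = ⊤) {j : ℕ}
    (h : W (F := F) v j = W v (j + 1)) : W (F := F) v j = ⊤ := by
  have hmul : ∀ x y : K, x ∈ W (F := F) v j → y ∈ W (F := F) v j →
      x * y ∈ W (F := F) v j := by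
    intro x y hx hy
    have := W_mul_W (F := F) v j j (Submodule.mul_mem_mul hx hy)
    rwa [W_stab v h j] at this
  let S : Subalgebra F K := (W (F := F) v j).toSubalgebra (one_mem_W v j) hmul
  have hle : Algebra.adjoin F (Set.range v) ≤ S := by
    refine Algebra.adjoin_le ?_
    rintro _ ⟨i, rfl⟩
    show v i ∈ W (F := F) v j
    have h1 : v i ∈ W (F := F) v (j + 1) := W_mono v (by omega) (v_mem_W1 v i)
    rwa [← h] at h1
  rw [hgen] at hle
  exact eq_top_iff.2 fun x _ => hle trivial

lemma finrank_W (hgen : Algebra.adjoin F (Set.range v) = ⊤) [FiniteDimensional F K]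
    {e : ℕ} (hfr : Module.finrank F K = e) (he : 1 ≤ e) (j : ℕ) :
    min (j + 1) e ≤ Module.finrank F (W (F := F) v j) := by
  induction j with
  | zero =>
    have hlt : (⊥ : Submodule F K) < W (F := F) v 0 := by
      refine bot_lt_iff_ne_bot.2 fun hb => ?_
      have := one_mem_W (F := F) v 0
      rw [hb] at this
      simpa using this
    have := Submodule.finrank_lt_finrank_of_lt hlt
    simp only [finrank_bot] at this
    omega
  | succ j ih =>
    by_cases h : W (F := F) v j = W v (j + 1)
    · have htop : W (F := F) v (j + 1) = ⊤ := h ▸ W_top v hgen h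
      rw [htop]
      rw [finrank_top, hfr]
      omega
    · have hlt : W (F := F) v j < W v (j + 1) := lt_of_le_of_ne (W_mono v (by omega)) h
      have := Submodule.finrank_lt_finrank_of_lt hlt
      omega

end PoonenAux

open PoonenAux in
/-- Poonen's Lemma 2.5 (`n = 2`): let `P` be a closed point of `𝔸²` over `F_q` of
degree `e`, i.e. a point `v ∈ 𝔸²(F_{q^e})` whose coordinates generate `F_{q^e}`
over `F_q`.  Then the fraction of polynomials `f ∈ F_q[x₁,x₂]` of total degree at
most `d` with `f(P) = 0` is at most `q^{−min(d+1, e)}`. -/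
theorem vanishing_at_affine_closed_point_bound (F K : Type*) [Field F] [Fintype F]
    [Field K] [Fintype K] [Algebra F K]
    (q e : ℕ) (hq : Fintype.card F = q) (hK : Fintype.card K = q ^ e) (he : 1 ≤ e)
    (v : Fin 2 → K) (hgen : Algebra.adjoin F (Set.range v) = ⊤) (d : ℕ) :
    (Nat.card {f : MvPolynomial (Fin 2) F // f.totalDegree ≤ d ∧ aeval v f = 0} : ℚ) /
      (Nat.card {f : MvPolynomial (Fin 2) F // f.totalDegree ≤ d} : ℚ)
    ≤ ((q : ℚ) ^ (min (d + 1) e))⁻¹ := by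
  have hq2 : 2 ≤ q := hq ▸ Fintype.one_lt_card
  -- finrank F K = e
  have hfr : Module.finrank F K = e := by
    have hc : Fintype.card K = q ^ Module.finrank F K := by
      rw [Module.card_eq_pow_finrank (K := F) (V := K), hq]
    have h2 : q ^ Module.finrank F K = q ^ e := by rw [← hc, hK]
    exact Nat.pow_right_injective hq2 h2
  set V := restrictTotalDegree (Fin 2) F d with hV
  let φ : V →ₗ[F] K := (aeval v).toLinearMap.comp V.subtype
  haveI : Finite V := Module.finite_of_finite F
  -- W d ≤ range φ
  have hWle : W (F := F) v d ≤ LinearMap.range φ := by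
    refine Submodule.span_le.2 ?_
    rintro _ ⟨⟨a, b⟩, hab, rfl⟩
    simp only [Set.mem_setOf_eq] at hab
    refine ⟨⟨X 0 ^ a * X 1 ^ b, ?_⟩, ?_⟩
    · rw [mem_restrictTotalDegree]
      refine le_trans (totalDegree_mul _ _) (le_trans (add_le_add
        (le_trans (totalDegree_pow _ _) ?_) (le_trans (totalDegree_pow _ _) ?_)) hab)
      · simp [totalDegree_X]
      · simp [totalDegree_X]
    · simp only [φ, LinearMap.coe_comp, Function.comp_apply, Submodule.coe_subtype,
        AlgHom.toLinearMap_apply, map_mul, map_pow, aeval_X]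
  have hrk : min (d + 1) e ≤ Module.finrank F (LinearMap.range φ) :=
    le_trans (finrank_W v hgen hfr he d) (Submodule.finrank_mono hWle)
  -- cardinalities
  haveI : Fintype (LinearMap.range φ) := Fintype.ofFinite _
  have hRcard : Nat.card (LinearMap.range φ) = q ^ Module.finrank F (LinearMap.range φ) := by
    rw [Nat.card_eq_fintype_card, Module.card_eq_pow_finrank (K := F), hq]
  have hcard : Nat.card V = Nat.card (LinearMap.ker φ) * Nat.card (LinearMap.range φ) := by
    rw [Submodule.card_eq_card_quotient_mul_card (LinearMap.ker φ)]
    rw [Nat.card_congr (φ.quotKerEquivRange).toEquiv]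
  have eA : {f : MvPolynomial (Fin 2) F // f.totalDegree ≤ d ∧ aeval v f = 0} ≃
      LinearMap.ker φ :=
    { toFun := fun x => ⟨⟨x.1, (mem_restrictTotalDegree _ _ _).2 x.2.1⟩, x.2.2⟩
      invFun := fun y => ⟨y.1.1, (mem_restrictTotalDegree _ _ _).1 y.1.2, y.2⟩
      left_inv := fun x => rfl
      right_inv := fun y => rfl }
  have eB : {f : MvPolynomial (Fin 2) F // f.totalDegree ≤ d} ≃ V :=
    { toFun := fun x => ⟨x.1, (mem_restrictTotalDegree _ _ _).2 x.2⟩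
      invFun := fun y => ⟨y.1, (mem_restrictTotalDegree _ _ _).1 y.2⟩
      left_inv := fun x => rfl
      right_inv := fun y => rfl }
  rw [Nat.card_congr eA, Nat.card_congr eB, hcard]
  haveI : Finite (LinearMap.ker φ) := Subtype.finite
  haveI : Nonempty (LinearMap.ker φ) := ⟨0⟩
  have hZpos : 0 < Nat.card (LinearMap.ker φ) := Nat.card_pos
  have hRge : (q : ℚ) ^ (min (d + 1) e) ≤ (Nat.card (LinearMap.range φ) : ℚ) := by
    rw [hRcard]
    push_cast
    exact pow_le_pow_right₀ (by exact_mod_cast le_trans (by norm_num) hq2) hrk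
  have hRpos : (0 : ℚ) < Nat.card (LinearMap.range φ) :=
    lt_of_lt_of_le (by positivity) hRge
  have hZ : (0 : ℚ) < Nat.card (LinearMap.ker φ) := by exact_mod_cast hZpos
  rw [Nat.cast_mul, div_mul_eq_div_div, div_self (ne_of_gt hZ)]
  rw [one_div]
  exact inv_anti₀ (by positivity) hRge
end
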